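/- arXiv:2302.01987 — 4 statements merged into one kernel-verified Lean document; each statement's English description precedes it below -/
import Mathlib

section
/- Let ζ > 0 and let F : ℝ → ℝ be a cumulative distribution function such that F(x) < 1 for every x ∈ ℝ (so the right endpoint of the support of F is τ = +∞), and write F̄ = 1 − F for the survival function. Then the following are equivalent: (i) there exist a sequence (a_n) of positive real numbers and a sequence (b_n) of real numbers such that for every x ∈ ℝ with 1 + ζx > 0, (F(a_n · x + b_n))^n converges to exp(−(1+ζx)^{−1/ζ}) as n → ∞; (ii) there exists a function δ : ℝ → ℝ with δ(η) > 0 for all sufficiently large η, such that for every x ∈ ℝ with 1 + ζx > 0, F̄(η + δ(η)·x) / F̄(η) converges to (1+ζx)^{−1/ζ} as η → +∞. -/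
/-!
(i) ⇒ (ii): taking logarithms, `F(aₙx + bₙ)ⁿ → exp(-G(x))`, with `G(x) = (1 + ζx)^(-1/ζ)`,
says `n F̄(aₙx + bₙ) → G(x)`. These functions of `x` are antitone and `G` is continuous and
strictly decreasing, so the convergence is locally uniform; as also `n F̄(bₙ₊₁) → 1 = G(0)`,
this forces `(bₙ₊₁ - bₙ)/aₙ → 0`. For large `η` pick `N` with `b_N ≤ η < b_{N+1}`; then
`η = b_N + a_N s` with `s → 0`, and `δ(η) = a_N` turns `F̄(η + δ(η)x)/F̄(η)` into the quotient
of `N F̄(a_N(x + s) + b_N)` by `N F̄(a_N s + b_N)`, which tends to `G(x)/G(0) = G(x)`.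

(ii) ⇒ (i): take for `bₙ` the `(1 - 1/n)`-quantile of `F` and `aₙ = δ(bₙ)`. Right continuity
gives `n F̄(bₙ) ≤ 1`, and comparing with `F̄(bₙ + δ(bₙ)u) > 1/n` for `u < 0` and `u → 0` gives
`n F̄(bₙ) → 1`. Hence `n F̄(aₙx + bₙ) → G(x)`, i.e. `F(aₙx + bₙ)ⁿ → exp(-G(x))`.
-/

open Filter Topology Asymptotics

theorem Real.isEquivalent_log_sub_one : Real.log ~[𝓝 1] fun u => u - 1 := by
  have h := (Real.hasDerivAt_log one_ne_zero).isLittleO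
  simp only [Real.log_one, sub_zero, inv_one, smul_eq_mul, mul_one] at h
  exact h

theorem tendsto_zero_of_tendsto_nat_mul {u : ℕ → ℝ} {c : ℝ}
    (h : Tendsto (fun n : ℕ => n * u n) atTop (𝓝 c)) : Tendsto u atTop (𝓝 0) :=
  (h.div_atTop tendsto_natCast_atTop_atTop).congr' <| by
    filter_upwards [eventually_ne_atTop 0] with n hn
    field_simp

theorem tendsto_nat_mul_sub_one_of_tendsto_pow {p : ℕ → ℝ} {t : ℝ} (hp : ∀ n, 0 ≤ p n)
    (h : Tendsto (fun n => p n ^ n) atTop (𝓝 (Real.exp t))) :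
    Tendsto (fun n : ℕ => n * (p n - 1)) atTop (𝓝 t) := by
  have hpos : ∀ᶠ n in atTop, 0 < p n := by
    filter_upwards [h.eventually (lt_mem_nhds (Real.exp_pos t)), eventually_ne_atTop 0]
      with n hn hn0
    exact (hp n).lt_of_ne fun h0 => by simp [← h0, zero_pow hn0] at hn
  have hlog : Tendsto (fun n : ℕ => n * Real.log (p n)) atTop (𝓝 t) := by
    have := (Real.continuousAt_log (Real.exp_pos t).ne').tendsto.comp h
    rw [Real.log_exp] at this
    refine this.congr' ?_
    filter_upwards [hpos] with n hn
    simp [Real.log_pow]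
  have hp1 : Tendsto p atTop (𝓝 1) := by
    have := (Real.continuous_exp.tendsto 0).comp (tendsto_zero_of_tendsto_nat_mul hlog)
    rw [Real.exp_zero] at this
    refine this.congr' ?_
    filter_upwards [hpos] with n hn
    simp [Real.exp_log hn]
  have hequiv := (Real.isEquivalent_log_sub_one.comp_tendsto hp1).mul
    (IsEquivalent.refl (u := fun n : ℕ => (n : ℝ)))
  refine (hequiv.tendsto_nhds_iff.1 ?_).congr fun n => mul_comm _ _
  exact hlog.congr fun n => mul_comm _ _

section AntitoneFamily

variable {ι : Type*} {l : Filter ι} {φ : ι → ℝ → ℝ} {G : ℝ → ℝ} {x : ℝ}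

theorem tendsto_apply_of_antitone_of_continuousAt (hφ : ∀ i, Antitone (φ i))
    (hconv : ∀ᶠ u in 𝓝 x, Tendsto (fun i => φ i u) l (𝓝 (G u))) (hG : ContinuousAt G x)
    {y : ι → ℝ} (hy : Tendsto y l (𝓝 x)) : Tendsto (fun i => φ i (y i)) l (𝓝 (G x)) := by
  refine tendsto_order.2 ⟨fun c hc => ?_, fun c hc => ?_⟩
  · obtain ⟨u, ⟨hcu, hu⟩, hxu⟩ := (((hG.eventually (lt_mem_nhds hc)).and hconv).filter_mono
      (nhdsWithin_le_nhds (s := Set.Ioi x))).and self_mem_nhdsWithin |>.exists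
    filter_upwards [hu.eventually (lt_mem_nhds hcu), hy.eventually (gt_mem_nhds hxu)]
      with i hi hyi
    exact hi.trans_le (hφ i hyi.le)
  · obtain ⟨u, ⟨hcu, hu⟩, hxu⟩ := (((hG.eventually (gt_mem_nhds hc)).and hconv).filter_mono
      (nhdsWithin_le_nhds (s := Set.Iio x))).and self_mem_nhdsWithin |>.exists
    filter_upwards [hu.eventually (gt_mem_nhds hcu), hy.eventually (lt_mem_nhds hxu)]
      with i hi hyi
    exact (hφ i hyi.le).trans_lt hi

theorem tendsto_of_antitone_of_tendsto_apply (hφ : ∀ i, Antitone (φ i))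
    (hconv : ∀ᶠ u in 𝓝 x, Tendsto (fun i => φ i u) l (𝓝 (G u))) {s : Set ℝ}
    (hG : StrictAntiOn G s) (hs : s ∈ 𝓝 x)
    {t : ι → ℝ} (ht : Tendsto (fun i => φ i (t i)) l (𝓝 (G x))) : Tendsto t l (𝓝 x) := by
  have hxs := mem_of_mem_nhds hs
  refine tendsto_order.2 ⟨fun c hc => ?_, fun c hc => ?_⟩
  · obtain ⟨u, ⟨hus, hu⟩, hcu, hux⟩ := ((Eventually.and hs hconv).filter_mono
      nhdsWithin_le_nhds).and (Ioo_mem_nhdsLT hc) |>.exists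
    obtain ⟨d, hxd, hdu⟩ := exists_between (hG hus hxs hux)
    filter_upwards [hu.eventually (lt_mem_nhds hdu), ht.eventually (gt_mem_nhds hxd)]
      with i hi hti
    exact hcu.trans (lt_of_not_ge fun htu => (hti.trans hi).not_ge (hφ i htu))
  · obtain ⟨u, ⟨hus, hu⟩, hxu, huc⟩ := ((Eventually.and hs hconv).filter_mono
      nhdsWithin_le_nhds).and (Ioo_mem_nhdsGT hc) |>.exists
    obtain ⟨d, hud, hdx⟩ := exists_between (hG hxs hus hxu)
    filter_upwards [hu.eventually (gt_mem_nhds hud), ht.eventually (lt_mem_nhds hdx)]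
      with i hi hti
    exact (lt_of_not_ge fun hut => (hi.trans hti).not_ge (hφ i hut)).trans huc

end AntitoneFamily

theorem Monotone.tendsto_atTop_of_tendsto_of_lt {α β ι : Type*} [LinearOrder α] [LinearOrder β]
    [TopologicalSpace β] [OrderTopology β] {F : α → β} (hF : Monotone F) {y : β}
    (hlt : ∀ x, F x < y) {l : Filter ι} {b : ι → α} (hb : Tendsto (fun i => F (b i)) l (𝓝 y)) :
    Tendsto b l atTop :=
  tendsto_atTop.2 fun c => (hb.eventually (lt_mem_nhds (hlt c))).mono fun _ h =>
    (hF.reflect_lt h).le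

theorem Monotone.antitone_mul_one_sub_affine {F : ℝ → ℝ} (hF : Monotone F) {c a b : ℝ}
    (hc : 0 ≤ c) (ha : 0 ≤ a) : Antitone fun u => c * (1 - F (a * u + b)) := fun _ _ huv =>
  mul_le_mul_of_nonneg_left (sub_le_sub_left (hF (by gcongr)) _) hc

theorem exists_nat_bracket_of_tendsto_atTop {α : Type*} [LinearOrder α] [NoMaxOrder α]
    {b : ℕ → α} (hb : Tendsto b atTop atTop) :
    ∃ N : α → ℕ, Tendsto N atTop atTop ∧ ∀ᶠ η in atTop, b (N η) ≤ η ∧ η < b (N η + 1) := by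
  have hbdd : ∀ η, BddAbove {n | b n ≤ η} := fun η => by
    obtain ⟨M, hM⟩ := eventually_atTop.1 (hb.eventually (eventually_gt_atTop η))
    exact ⟨M, fun n hn => le_of_not_gt fun h => (hM n h.le).not_ge hn⟩
  refine ⟨fun η => sSup {n | b n ≤ η}, tendsto_atTop.2 fun k => ?_, ?_⟩
  · filter_upwards [eventually_ge_atTop (b k)] with η hη using le_csSup (hbdd η) hη
  · filter_upwards [eventually_ge_atTop (b 0)] with η hη
    exact ⟨Nat.sSup_mem ⟨0, hη⟩ (hbdd η),
      lt_of_not_ge fun h => (le_csSup (hbdd η) h).not_gt (Nat.lt_succ_self _)⟩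

noncomputable def quantile (F : ℝ → ℝ) (p : ℝ) : ℝ := sInf {x | p ≤ F x}

theorem quantile_le_iff {F : ℝ → ℝ} (hF : Monotone F)
    (hrc : ∀ x, ContinuousWithinAt F (Set.Ici x) x) (hbot : Tendsto F atBot (𝓝 0))
    (htop : Tendsto F atTop (𝓝 1)) {p : ℝ} (hp₀ : 0 < p) (hp₁ : p < 1) {x : ℝ} :
    quantile F p ≤ x ↔ p ≤ F x := by
  obtain ⟨x₀, hx₀⟩ := (hbot.eventually (gt_mem_nhds hp₀)).exists
  obtain ⟨x₁, hx₁⟩ := (htop.eventually (lt_mem_nhds hp₁)).exists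
  have hbdd : BddBelow {x | p ≤ F x} :=
    ⟨x₀, fun y hy => le_of_not_gt fun h => (hF h.le).not_gt (hx₀.trans_le hy)⟩
  have hlt : ∀ t, quantile F p < t → p ≤ F t := fun t ht => by
    obtain ⟨y, hy, hyt⟩ := (csInf_lt_iff hbdd ⟨x₁, hx₁.le⟩).1 ht
    exact hy.trans (hF hyt.le)
  have hq : p ≤ F (quantile F p) :=
    ge_of_tendsto ((hrc _).mono_left (nhdsWithin_mono _ Set.Ioi_subset_Ici_self))
      (eventually_nhdsWithin_of_forall hlt)
  exact ⟨fun h => hq.trans (hF h), fun h => csInf_le hbdd h⟩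

noncomputable def gpTail (ζ x : ℝ) : ℝ := (1 + ζ * x) ^ (-1 / ζ)

theorem gpTail_zero (ζ : ℝ) : gpTail ζ 0 = 1 := by simp [gpTail]

theorem continuousAt_gpTail {ζ x : ℝ} (hx : 0 < 1 + ζ * x) : ContinuousAt (gpTail ζ) x :=
  ContinuousAt.rpow_const (by fun_prop) (Or.inl hx.ne')

theorem strictAntiOn_gpTail {ζ : ℝ} (hζ : 0 < ζ) :
    StrictAntiOn (gpTail ζ) {x | 0 < 1 + ζ * x} := fun x hx y hy hxy =>
  Real.strictAntiOn_rpow_Ioi_of_exponent_neg (div_neg_of_neg_of_pos (by norm_num) hζ) hx hy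
    (by gcongr)

theorem mem_nhds_gpTail_domain (ζ : ℝ) {x : ℝ} (hx : 0 < 1 + ζ * x) :
    {x | 0 < 1 + ζ * x} ∈ 𝓝 x :=
  (isOpen_lt continuous_const (by fun_prop)).mem_nhds hx

section NormingToTailRatio

variable {ζ : ℝ} {F : ℝ → ℝ} {a b : ℕ → ℝ}

theorem tendsto_succ_sub_div_of_tendsto_nat_mul_tail (hζ : 0 < ζ) (hF : Monotone F)
    (ha : ∀ n, 0 < a n) (h : ∀ x, 0 < 1 + ζ * x →
      Tendsto (fun n : ℕ => n * (1 - F (a n * x + b n))) atTop (𝓝 (gpTail ζ x))) :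
    Tendsto (fun n => (b (n + 1) - b n) / a n) atTop (𝓝 0) := by
  have h0 : (0 : ℝ) < 1 + ζ * 0 := by simp
  have hb0 : Tendsto (fun n : ℕ => n * (1 - F (b n))) atTop (𝓝 1) := by
    simpa [gpTail_zero] using h 0 h0
  have hsucc := (hb0.comp (tendsto_add_atTop_nat 1)).sub
    ((tendsto_zero_of_tendsto_nat_mul hb0).comp (tendsto_add_atTop_nat 1))
  rw [sub_zero] at hsucc
  refine tendsto_of_antitone_of_tendsto_apply
    (fun n => hF.antitone_mul_one_sub_affine n.cast_nonneg (ha n).le)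
    (eventually_of_mem (mem_nhds_gpTail_domain ζ h0) h) (strictAntiOn_gpTail hζ)
    (mem_nhds_gpTail_domain ζ h0) ?_
  rw [gpTail_zero]
  refine hsucc.congr fun n => ?_
  have hb_succ : a n * ((b (n + 1) - b n) / a n) + b n = b (n + 1) := by
    field_simp [(ha n).ne']; ring
  simp only [Function.comp, hb_succ]
  push_cast
  ring

theorem exists_tendsto_tail_ratio_of_tendsto_nat_mul_tail (hζ : 0 < ζ) (hF : Monotone F)
    (hlt : ∀ x, F x < 1) (ha : ∀ n, 0 < a n) (h : ∀ x, 0 < 1 + ζ * x →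
      Tendsto (fun n : ℕ => n * (1 - F (a n * x + b n))) atTop (𝓝 (gpTail ζ x))) :
    ∃ δ : ℝ → ℝ, (∀ᶠ η in atTop, 0 < δ η) ∧ ∀ x, 0 < 1 + ζ * x →
      Tendsto (fun η => (1 - F (η + δ η * x)) / (1 - F η)) atTop (𝓝 (gpTail ζ x)) := by
  have h0 : (0 : ℝ) < 1 + ζ * 0 := by simp
  have hb : Tendsto b atTop atTop := by
    refine hF.tendsto_atTop_of_tendsto_of_lt hlt ?_
    have := tendsto_zero_of_tendsto_nat_mul (by simpa [gpTail_zero] using h 0 h0)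
    simpa using (tendsto_const_nhds (x := (1 : ℝ))).sub this
  obtain ⟨N, hN, hNb⟩ := exists_nat_bracket_of_tendsto_atTop hb
  set s : ℝ → ℝ := fun η => (η - b (N η)) / a (N η)
  have hs : Tendsto s atTop (𝓝 0) := by
    refine tendsto_of_tendsto_of_tendsto_of_le_of_le' tendsto_const_nhds
      ((tendsto_succ_sub_div_of_tendsto_nat_mul_tail hζ hF ha h).comp hN) ?_ ?_
    · filter_upwards [hNb] with η hη using div_nonneg (by linarith [hη.1]) (ha _).le
    · filter_upwards [hNb] with η hη using div_le_div_of_nonneg_right (by linarith [hη.2]) (ha _).le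
  have hN_tail : ∀ x, 0 < 1 + ζ * x → ∀ y : ℝ → ℝ, Tendsto y atTop (𝓝 x) →
      Tendsto (fun η => N η * (1 - F (a (N η) * y η + b (N η)))) atTop (𝓝 (gpTail ζ x)) :=
    fun x hx y hy => tendsto_apply_of_antitone_of_continuousAt
      (φ := fun η u => N η * (1 - F (a (N η) * u + b (N η))))
      (fun η => hF.antitone_mul_one_sub_affine (N η).cast_nonneg (ha _).le)
      (eventually_of_mem (mem_nhds_gpTail_domain ζ hx) fun u hu => (h u hu).comp hN)
      (continuousAt_gpTail hx) hy
  refine ⟨fun η => a (N η), Eventually.of_forall fun η => ha _, fun x hx => ?_⟩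
  have hratio := (hN_tail x hx _ (by simpa using (tendsto_const_nhds (x := x)).add hs)).div
    (hN_tail 0 h0 s hs) (by rw [gpTail_zero]; exact one_ne_zero)
  rw [gpTail_zero, div_one] at hratio
  refine hratio.congr' ?_
  filter_upwards [hN.eventually (eventually_ne_atTop 0)] with η hη
  have hs_eq : a (N η) * s η + b (N η) = η := by
    simp only [s]; field_simp [(ha (N η)).ne']; ring
  have hxs_eq : a (N η) * (x + s η) + b (N η) = η + a (N η) * x := by
    linear_combination hs_eq
  simp only [Pi.div_apply, hxs_eq, hs_eq]
  exact mul_div_mul_left _ _ (Nat.cast_ne_zero.2 hη)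

end NormingToTailRatio

theorem tendsto_nat_mul_one_sub_of_quantile_bounds {F : ℝ → ℝ} (hpos : ∀ x, 0 < 1 - F x)
    {b : ℕ → ℝ} (hb : Tendsto b atTop atTop) (hle : ∀ᶠ n : ℕ in atTop, 1 - F (b n) ≤ (n : ℝ)⁻¹)
    (hlt : ∀ᶠ n : ℕ in atTop, ∀ x < b n, (n : ℝ)⁻¹ < 1 - F x) {δ G : ℝ → ℝ}
    (hδ : ∀ᶠ η in atTop, 0 < δ η) (hG : ContinuousAt G 0) (hG0 : G 0 = 1)
    (hratio : ∀ᶠ u in 𝓝 0,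
      Tendsto (fun η => (1 - F (η + δ η * u)) / (1 - F η)) atTop (𝓝 (G u))) :
    Tendsto (fun n : ℕ => n * (1 - F (b n))) atTop (𝓝 1) := by
  have hlower : ∀ c, 0 < c → c < 1 → ∀ᶠ n : ℕ in atTop, c < n * (1 - F (b n)) := by
    intro c hc₀ hc₁
    have hcG : ∀ᶠ u in 𝓝 0, c * G u < 1 :=
      (continuousAt_const.mul hG).eventually (gt_mem_nhds (by simpa [hG0] using hc₁))
    obtain ⟨u, ⟨hcu, hu⟩, hu₀⟩ := ((hcG.and hratio).filter_mono
      (nhdsWithin_le_nhds (s := Set.Iio 0))).and self_mem_nhdsWithin |>.exists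
    filter_upwards [((hu.comp hb).const_mul c).eventually (gt_mem_nhds hcu), hb.eventually hδ,
      hlt, eventually_gt_atTop 0] with n hn hδn hltn hn₀
    have hshift : (n : ℝ)⁻¹ < 1 - F (b n + δ (b n) * u) :=
      hltn _ (by nlinarith [hu₀])
    rw [Function.comp, mul_div_assoc', div_lt_one (hpos _)] at hn
    rw [← div_lt_iff₀' (by positivity), div_eq_mul_inv]
    exact (mul_lt_mul_of_pos_left hshift hc₀).trans hn
  refine tendsto_order.2 ⟨fun c hc => ?_, fun c hc => ?_⟩
  · exact (hlower _ (lt_max_of_lt_right one_half_pos) (max_lt hc one_half_lt_one)).mono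
      fun n hn => (le_max_left _ _).trans_lt hn
  · filter_upwards [hle, eventually_gt_atTop 0] with n hn hn₀
    calc (n : ℝ) * (1 - F (b n)) ≤ n * (n : ℝ)⁻¹ := by gcongr
      _ = 1 := mul_inv_cancel₀ (by positivity)
      _ < c := hc

theorem exists_tendsto_pow_of_tendsto_tail_ratio {ζ : ℝ} {F : ℝ → ℝ} (hF : Monotone F)
    (hrc : ∀ x, ContinuousWithinAt F (Set.Ici x) x) (hbot : Tendsto F atBot (𝓝 0))
    (htop : Tendsto F atTop (𝓝 1)) (hlt : ∀ x, F x < 1) {δ : ℝ → ℝ}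
    (hδ : ∀ᶠ η in atTop, 0 < δ η) (h : ∀ x, 0 < 1 + ζ * x →
      Tendsto (fun η => (1 - F (η + δ η * x)) / (1 - F η)) atTop (𝓝 (gpTail ζ x))) :
    ∃ a b : ℕ → ℝ, (∀ n, 0 < a n) ∧ ∀ x, 0 < 1 + ζ * x →
      Tendsto (fun n => F (a n * x + b n) ^ n) atTop (𝓝 (Real.exp (-gpTail ζ x))) := by
  set b : ℕ → ℝ := fun n => quantile F (1 - (n : ℝ)⁻¹)
  have hq : ∀ᶠ n : ℕ in atTop, ∀ x, b n ≤ x ↔ 1 - (n : ℝ)⁻¹ ≤ F x := by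
    filter_upwards [eventually_gt_atTop 1] with n hn x
    have hn' : (1 : ℝ) < n := by exact_mod_cast hn
    exact quantile_le_iff hF hrc hbot htop (by simp [inv_lt_one_of_one_lt₀ hn'])
      (by simp [hn'.trans' one_pos])
  have hbF : ∀ᶠ n : ℕ in atTop, 1 - (n : ℝ)⁻¹ ≤ F (b n) := hq.mono fun n h => (h _).1 le_rfl
  have hb : Tendsto b atTop atTop := by
    refine hF.tendsto_atTop_of_tendsto_of_lt hlt
      (tendsto_of_tendsto_of_tendsto_of_le_of_le' ?_ tendsto_const_nhds hbF
        (Eventually.of_forall fun n => (hlt _).le))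
    simpa using (tendsto_const_nhds (x := (1 : ℝ))).sub tendsto_inv_atTop_nhds_zero_nat
  have h0 : (0 : ℝ) < 1 + ζ * 0 := by simp
  have hmul := tendsto_nat_mul_one_sub_of_quantile_bounds (fun x => sub_pos.2 (hlt x)) hb
    (hbF.mono fun n hn => by linarith)
    (hq.mono fun n hn x hx => by linarith [(not_congr (hn x)).1 hx.not_ge])
    hδ (continuousAt_gpTail h0) (gpTail_zero ζ)
    (eventually_of_mem (mem_nhds_gpTail_domain ζ h0) h)
  set a : ℕ → ℝ := fun n => if 0 < δ (b n) then δ (b n) else 1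
  have ha : ∀ n, 0 < a n := fun n => by
    simp only [a]; split_ifs with hn <;> [exact hn; exact one_pos]
  refine ⟨a, b, ha, fun x hx => ?_⟩
  refine (Real.tendsto_one_add_pow_exp_of_tendsto (g := fun n => F (a n * x + b n) - 1) ?_).congr
    fun n => by rw [add_sub_cancel]
  have := (((h x hx).comp hb).mul hmul).neg
  rw [mul_one] at this
  refine this.congr' ?_
  filter_upwards [hb.eventually hδ] with n hn
  simp only [Function.comp, a, if_pos hn, mul_comm (δ (b n)) x, add_comm (x * δ (b n))]
  field_simp [(sub_pos.2 (hlt (b n))).ne']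
  ring

/-- Pickands–Balkema–de Haan theorem, case ζ > 0 (right endpoint τ = +∞). -/
theorem pickands_balkema_deHaan_pos
    (ζ : ℝ) (hζ : 0 < ζ) (F : ℝ → ℝ)
    (hmono : Monotone F)
    (hrc : ∀ x : ℝ, ContinuousWithinAt F (Set.Ici x) x)
    (hbot : Tendsto F atBot (𝓝 0))
    (htop : Tendsto F atTop (𝓝 1))
    (hlt : ∀ x : ℝ, F x < 1) :
    (∃ (a b : ℕ → ℝ), (∀ n, 0 < a n) ∧
      ∀ x : ℝ, 1 + ζ * x > 0 →
        Tendsto (fun n : ℕ => (F (a n * x + b n)) ^ n) atTop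
          (𝓝 (Real.exp (-((1 + ζ * x) ^ (-1 / ζ)))))) ↔
    (∃ δ : ℝ → ℝ, (∀ᶠ η in atTop, 0 < δ η) ∧
      ∀ x : ℝ, 1 + ζ * x > 0 →
        Tendsto (fun η : ℝ => (1 - F (η + δ η * x)) / (1 - F η)) atTop
          (𝓝 ((1 + ζ * x) ^ (-1 / ζ)))) := by
  have hF0 : ∀ x, 0 ≤ F x := fun x =>
    le_of_tendsto hbot (eventually_atBot.2 ⟨x, fun _ hy => hmono hy⟩)
  constructor
  · rintro ⟨a, b, ha, h⟩
    refine exists_tendsto_tail_ratio_of_tendsto_nat_mul_tail (b := b) hζ hmono hlt ha fun x hx => ?_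
    have := (tendsto_nat_mul_sub_one_of_tendsto_pow (fun n => hF0 _) (h x hx)).neg
    rw [neg_neg] at this
    exact this.congr fun n => by ring
  · rintro ⟨δ, hδ, h⟩
    exact exists_tendsto_pow_of_tendsto_tail_ratio hmono hrc hbot htop hlt hδ h
end

section
/- Let d be a positive natural number and let W be a d×d real matrix. Let A := W ∘ W be the Hadamard (entrywise) product of W with itself, so A(i,j) = W(i,j)². Then trace(exp(A)) = d if and only if the directed graph on vertices {1,…,d} with an edge from i to j whenever W(i,j) ≠ 0 has no directed cycle, i.e., if and only if there exist no k ≥ 1 and indices v_0, v_1, …, v_k with v_k = v_0 and W(v_i, v_{i+1}) ≠ 0 for all 0 ≤ i < k. -/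
/-!
All entries of `A = W ∘ W` are nonnegative, so every term `tr (A ^ k) / k!` of the exponential
series of `tr (exp A)` is nonnegative, and the term `k = 0` is `d`. Hence `tr (exp A) = d` iff
`tr (A ^ k) = 0` for all `k ≥ 1`. For a nonnegative matrix, `(A ^ k) i j > 0` iff there is a walk
of length `k` from `i` to `j` along positive entries, so `tr (A ^ k) > 0` iff there is such a closed
walk; and the positive entries of `A` are exactly the nonzero entries of `W`.
-/

open Matrix
open scoped Nat

namespace Matrix

section Order

variable {n R : Type*} [Fintype n] [DecidableEq n]
  [Semiring R] [LinearOrder R] [IsStrictOrderedRing R] {A : Matrix n n R}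

theorem pow_apply_pos_iff_exists_walk (hA : ∀ i j, 0 ≤ A i j) (k : ℕ) (i j : n) :
    0 < (A ^ k) i j ↔
      ∃ v : ℕ → n, v 0 = i ∧ v k = j ∧ ∀ l < k, 0 < A (v l) (v (l + 1)) := by
  induction k generalizing j with
  | zero =>
    rcases eq_or_ne i j with rfl | hij
    · simpa using ⟨fun _ => i, rfl⟩
    · simpa [hij] using fun v hv => hv ▸ hij
  | succ k ih =>
    rw [pow_succ, mul_apply, Finset.sum_pos_iff_of_nonneg fun u _ =>
      mul_nonneg (pow_apply_nonneg hA k i u) (hA u j)]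
    constructor
    · rintro ⟨u, -, hu⟩
      obtain ⟨v, hv0, hvk, hv⟩ := (ih u).1 (pos_of_mul_pos_left hu (hA u j))
      refine ⟨Function.update v (k + 1) j, by simp [hv0], by simp, fun l hl => ?_⟩
      rcases Nat.lt_succ_iff_lt_or_eq.1 hl with hlk | rfl
      · rw [Function.update_of_ne (by omega), Function.update_of_ne (by omega)]
        exact hv l hlk
      · simpa [hvk] using pos_of_mul_pos_right hu (pow_apply_nonneg hA _ i u)
    · rintro ⟨v, hv0, hvk, hv⟩
      have hwalk : 0 < (A ^ k) i (v k) :=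
        (ih (v k)).2 ⟨v, hv0, rfl, fun l hl => hv l (by omega)⟩
      exact ⟨v k, Finset.mem_univ _, mul_pos hwalk (hvk ▸ hv k k.lt_succ_self)⟩

theorem trace_pow_nonneg (hA : ∀ i j, 0 ≤ A i j) (k : ℕ) : 0 ≤ trace (A ^ k) :=
  Finset.sum_nonneg fun i _ => pow_apply_nonneg hA k i i

theorem trace_pow_pos_iff_exists_closed_walk (hA : ∀ i j, 0 ≤ A i j) (k : ℕ) :
    0 < trace (A ^ k) ↔ ∃ v : ℕ → n, v k = v 0 ∧ ∀ l < k, 0 < A (v l) (v (l + 1)) := by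
  simp only [trace, diag_apply]
  rw [Finset.sum_pos_iff_of_nonneg fun i _ => pow_apply_nonneg hA k i i]
  simp only [Finset.mem_univ, true_and, pow_apply_pos_iff_exists_walk hA]
  exact ⟨fun ⟨i, v, hv0, hvk, hv⟩ => ⟨v, hvk.trans hv0.symm, hv⟩,
    fun ⟨v, hvk, hv⟩ => ⟨v 0, v, rfl, hvk, hv⟩⟩

theorem trace_pow_eq_zero_iff_not_exists_closed_walk (hA : ∀ i j, 0 ≤ A i j) (k : ℕ) :
    trace (A ^ k) = 0 ↔
      ¬ ∃ v : ℕ → n, v k = v 0 ∧ ∀ l < k, 0 < A (v l) (v (l + 1)) := by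
  rw [← trace_pow_pos_iff_exists_closed_walk hA, not_lt, (trace_pow_nonneg hA k).ge_iff_eq']

end Order

section Exp

variable {n 𝕂 : Type*} [Fintype n] [DecidableEq n] [RCLike 𝕂]

theorem hasSum_trace_exp (A : Matrix n n 𝕂) :
    HasSum (fun k => (k !⁻¹ : 𝕂) * trace (A ^ k)) (trace (NormedSpace.exp A)) := by
  have h : HasSum (fun k => (k !⁻¹ : 𝕂) • A ^ k) (NormedSpace.exp A) := by
    open scoped Matrix.Norms.Operator in
    exact NormedSpace.exp_series_hasSum_exp' A
  simpa [Function.comp_def, trace_smul] using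
    h.map (traceAddMonoidHom n 𝕂) continuous_id.matrix_trace

theorem trace_exp_eq_card_iff {A : Matrix n n ℝ} (hA : ∀ i j, 0 ≤ A i j) :
    trace (NormedSpace.exp A) = Fintype.card n ↔ ∀ k, trace (A ^ (k + 1)) = 0 := by
  have htail := (hasSum_nat_add_iff' 1).2 (hasSum_trace_exp A)
  simp only [Finset.range_one, Finset.sum_singleton, Nat.factorial_zero, Nat.cast_one, inv_one,
    pow_zero, trace_one, one_mul] at htail
  set tail := fun k : ℕ => ((k + 1)! : ℝ)⁻¹ * trace (A ^ (k + 1))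
  have htail_nonneg : ∀ k, 0 ≤ tail k := fun k =>
    mul_nonneg (by positivity) (trace_pow_nonneg hA _)
  have hsum_zero : trace (NormedSpace.exp A) - Fintype.card n = 0 ↔ HasSum tail 0 :=
    ⟨fun h => h ▸ htail, htail.unique⟩
  rw [← sub_eq_zero, hsum_zero, hasSum_zero_iff_of_nonneg htail_nonneg, funext_iff]
  simp [tail, Nat.factorial_ne_zero]

end Exp
end Matrix

theorem trace_exp_hadamard_eq_iff_acyclic_general
    (d : ℕ) (W : Matrix (Fin d) (Fin d) ℝ)
    (A : Matrix (Fin d) (Fin d) ℝ) (hA : ∀ i j, A i j = (W i j) ^ 2) :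
    Matrix.trace (NormedSpace.exp A) = (d : ℝ) ↔
      ¬ ∃ (k : ℕ) (v : ℕ → Fin d), 1 ≤ k ∧ v k = v 0 ∧
        ∀ i < k, W (v i) (v (i + 1)) ≠ 0 := by
  have hA_nonneg : ∀ i j, 0 ≤ A i j := fun i j => hA i j ▸ sq_nonneg _
  have hA_pos : ∀ i j, 0 < A i j ↔ W i j ≠ 0 := fun i j => by rw [hA, sq_pos_iff]
  rw [show (d : ℝ) = Fintype.card (Fin d) by simp, trace_exp_eq_card_iff hA_nonneg]
  simp_rw [trace_pow_eq_zero_iff_not_exists_closed_walk hA_nonneg, hA_pos]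
  constructor
  · rintro h ⟨_ | k, v, hk, hv⟩
    · omega
    · exact h k ⟨v, hv⟩
  · rintro h k ⟨v, hv⟩
    exact h ⟨k + 1, v, k.succ_pos, hv⟩

/-- Acyclicity characterization: tr(exp(W ∘ W)) = d iff the graph of nonzero
entries of W has no directed cycle. -/
theorem trace_exp_hadamard_eq_iff_acyclic
    (d : ℕ) (hd : 0 < d) (W : Matrix (Fin d) (Fin d) ℝ)
    (A : Matrix (Fin d) (Fin d) ℝ) (hA : ∀ i j, A i j = (W i j) ^ 2) :
    Matrix.trace (NormedSpace.exp A) = (d : ℝ) ↔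
      ¬ ∃ (k : ℕ) (v : ℕ → Fin d), 1 ≤ k ∧ v k = v 0 ∧
        ∀ i < k, W (v i) (v (i + 1)) ≠ 0 :=
  trace_exp_hadamard_eq_iff_acyclic_general d W A hA
end

section
/- Let d be a natural number and let A be a d×d real matrix all of whose entries are nonnegative. Then trace(exp(A)) = d if and only if trace(A^k) = 0 for every natural number k ≥ 1. -/
/-!
The exponential series gives `tr (exp A) = ∑ₙ tr (Aⁿ) / n!`, whose `n = 0` term is `d`.
For entrywise nonnegative `A` every term is nonnegative, so the sum equals its first term
exactly when all later terms vanish.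
-/

open Matrix NormedSpace
open scoped Nat

theorem HasSum.matrix_trace {X n R : Type*} [Fintype n] [AddCommMonoid R] [TopologicalSpace R]
    [ContinuousAdd R] {f : X → Matrix n n R} {a : Matrix n n R} (hf : HasSum f a) :
    HasSum (fun x => trace (f x)) (trace a) :=
  hf.map (traceAddMonoidHom n R) continuous_id.matrix_trace

section

-- `exp` on matrices needs no norm; some algebra norm is chosen only to invoke the convergence
-- of the exponential series.
attribute [local instance] Matrix.linftyOpNormedRing Matrix.linftyOpNormedAlgebra

theorem Matrix.hasSum_trace_exp_s5 {m 𝕂 : Type*} [Fintype m] [DecidableEq m] [RCLike 𝕂]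
    (A : Matrix m m 𝕂) : HasSum (fun n => (n !⁻¹ : 𝕂) * trace (A ^ n)) (trace (exp A)) := by
  have h := (exp_series_hasSum_exp' (𝕂 := 𝕂) A).matrix_trace
  simp only [trace_smul, smul_eq_mul] at h
  exact h

end

theorem HasSum.eq_apply_zero_iff_of_nonneg {α : Type*} [AddCommGroup α] [PartialOrder α]
    [IsOrderedAddMonoid α] [TopologicalSpace α] [IsTopologicalAddGroup α] [OrderClosedTopology α]
    {f : ℕ → α} {a : α} (hf : HasSum f a) (h : ∀ n, 0 ≤ f n) :
    a = f 0 ↔ ∀ n, f (n + 1) = 0 := by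
  have htail : HasSum (fun n => f (n + 1)) (a - f 0) := by
    simpa only [Finset.sum_range_one] using (hasSum_nat_add_iff' 1).2 hf
  rw [← sub_eq_zero, ← funext_iff]
  refine ⟨fun ha => (hasSum_zero_iff_of_nonneg fun n => h (n + 1)).1 (ha ▸ htail),
    fun hzero => htail.unique (by simpa only [hzero] using hasSum_zero)⟩

/-- For an entrywise-nonnegative matrix A, tr(exp(A)) = d iff tr(A^k) = 0 for
all k ≥ 1. -/
theorem trace_exp_eq_iff_trace_pow_eq_zero
    (d : ℕ) (A : Matrix (Fin d) (Fin d) ℝ) (hA : ∀ i j, 0 ≤ A i j) :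
    Matrix.trace (NormedSpace.exp A) = (d : ℝ) ↔
      ∀ k : ℕ, 1 ≤ k → Matrix.trace (A ^ k) = 0 := by
  have hterm_nonneg (n : ℕ) : 0 ≤ (n !⁻¹ : ℝ) * trace (A ^ n) :=
    mul_nonneg (by positivity) (Finset.sum_nonneg fun i _ => pow_apply_nonneg hA n i i)
  have hterm_zero : ((0 : ℕ)!⁻¹ : ℝ) * trace (A ^ 0) = d := by simp
  rw [← hterm_zero, (hasSum_trace_exp_s5 A).eq_apply_zero_iff_of_nonneg hterm_nonneg]
  refine ⟨fun h k hk => ?_, fun h n => by rw [h (n + 1) n.succ_pos, mul_zero]⟩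
  obtain ⟨n, rfl⟩ := Nat.exists_eq_add_of_le' hk
  simpa [Nat.factorial_ne_zero] using h n
end

section
/- Let d be a natural number and let A be a d×d real matrix all of whose entries are nonnegative. Then A is nilpotent if and only if the directed graph on vertices {1,…,d} with an edge from i to j whenever A(i,j) > 0 has no directed cycle, i.e., if and only if there exist no k ≥ 1 and indices v_0, v_1, …, v_k with v_k = v_0 and A(v_i, v_{i+1}) > 0 for all 0 ≤ i < k. Moreover, in the acyclic case, A^d = 0. -/
open Matrix

private lemma pow_entry_nonneg' {d : ℕ} (A : Matrix (Fin d) (Fin d) ℝ)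
    (hA : ∀ i j, 0 ≤ A i j) : ∀ k i j, 0 ≤ (A ^ k) i j := by
  intro k
  induction k with
  | zero =>
    intro i j
    by_cases h : i = j <;> simp [one_apply, h]
  | succ n ih =>
    intro i j
    rw [pow_succ, mul_apply]
    exact Finset.sum_nonneg fun m _ => mul_nonneg (ih i m) (hA m j)

private lemma pos_of_path' {d : ℕ} (A : Matrix (Fin d) (Fin d) ℝ)
    (hA : ∀ i j, 0 ≤ A i j) :
    ∀ k (v : ℕ → Fin d), (∀ t < k, 0 < A (v t) (v (t+1))) →
      0 < (A ^ k) (v 0) (v k) := by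
  intro k
  induction k with
  | zero => intro v _; simp [one_apply]
  | succ n ih =>
    intro v hv
    rw [pow_succ, mul_apply]
    have h1 : 0 < (A ^ n) (v 0) (v n) :=
      ih v fun t ht => hv t (ht.trans (Nat.lt_succ_self n))
    have h2 : 0 < A (v n) (v (n+1)) := hv n (Nat.lt_succ_self n)
    exact Finset.sum_pos'
      (fun m _ => mul_nonneg (pow_entry_nonneg' A hA n _ m) (hA m _))
      ⟨v n, Finset.mem_univ _, mul_pos h1 h2⟩

private lemma path_of_pos' {d : ℕ} (A : Matrix (Fin d) (Fin d) ℝ)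
    (hA : ∀ i j, 0 ≤ A i j) :
    ∀ k (i j : Fin d), 0 < (A ^ k) i j →
      ∃ v : ℕ → Fin d, v 0 = i ∧ v k = j ∧ ∀ t < k, 0 < A (v t) (v (t+1)) := by
  intro k
  induction k with
  | zero =>
    intro i j h
    rw [pow_zero] at h
    by_cases hij : i = j
    · exact ⟨fun _ => i, rfl, hij, fun t ht => absurd ht (Nat.not_lt_zero t)⟩
    · simp [one_apply, hij] at h
  | succ n ih =>
    intro i j h
    rw [pow_succ, mul_apply] at h
    obtain ⟨m, -, hm⟩ : ∃ m ∈ Finset.univ, 0 < (A ^ n) i m * A m j := by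
      by_contra hc
      push_neg at hc
      have hle : ∑ m, (A ^ n) i m * A m j ≤ 0 :=
        Finset.sum_nonpos fun m hmem => hc m hmem
      linarith
    have h1 : 0 < (A ^ n) i m := by
      rcases lt_or_eq_of_le (pow_entry_nonneg' A hA n i m) with h' | h'
      · exact h'
      · rw [← h', zero_mul] at hm; exact absurd hm (lt_irrefl 0)
    have h2 : 0 < A m j := by
      rcases lt_or_eq_of_le (hA m j) with h' | h'
      · exact h'
      · rw [← h', mul_zero] at hm; exact absurd hm (lt_irrefl 0)
    obtain ⟨v, hv0, hvn, hv⟩ := ih i m h1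
    refine ⟨fun t => if t ≤ n then v t else j, by simp [hv0], by simp, ?_⟩
    intro t ht
    rcases Nat.lt_succ_iff_lt_or_eq.mp ht with h' | h'
    · simpa [Nat.le_of_lt h', Nat.succ_le_of_lt h'] using hv t h'
    · subst h'
      simpa [hvn] using h2

private lemma cycle_of_repeat' {d : ℕ} (A : Matrix (Fin d) (Fin d) ℝ) (v : ℕ → Fin d)
    (n : ℕ) (hv : ∀ t < n, 0 < A (v t) (v (t+1))) (a b : ℕ) (hab : a < b) (hb : b ≤ n)
    (heq : v a = v b) :
    ∃ (k : ℕ) (w : ℕ → Fin d), 1 ≤ k ∧ w k = w 0 ∧ ∀ i < k, 0 < A (w i) (w (i + 1)) := by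
  refine ⟨b - a, fun t => v (a + t), by omega, ?_, ?_⟩
  · show v (a + (b - a)) = v (a + 0)
    rw [Nat.add_sub_cancel' hab.le, Nat.add_zero, heq]
  · intro t ht
    have hlt : a + t < n := by omega
    simpa [Nat.add_assoc] using hv (a + t) hlt

/-- An entrywise-nonnegative matrix is nilpotent iff the graph of its positive
entries has no directed cycle; in the acyclic case, A^d = 0. -/
theorem isNilpotent_iff_acyclic_of_nonneg
    (d : ℕ) (A : Matrix (Fin d) (Fin d) ℝ) (hA : ∀ i j, 0 ≤ A i j) :
    (IsNilpotent A ↔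
      ¬ ∃ (k : ℕ) (v : ℕ → Fin d), 1 ≤ k ∧ v k = v 0 ∧
        ∀ i < k, 0 < A (v i) (v (i + 1))) ∧
    ((¬ ∃ (k : ℕ) (v : ℕ → Fin d), 1 ≤ k ∧ v k = v 0 ∧
        ∀ i < k, 0 < A (v i) (v (i + 1))) → A ^ d = 0) := by
  have hacyc : (¬ ∃ (k : ℕ) (v : ℕ → Fin d), 1 ≤ k ∧ v k = v 0 ∧
      ∀ i < k, 0 < A (v i) (v (i + 1))) → A ^ d = 0 := by
    intro hnc
    ext i j
    by_contra h0
    have hpos : 0 < (A ^ d) i j :=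
      lt_of_le_of_ne (pow_entry_nonneg' A hA d i j) (Ne.symm h0)
    obtain ⟨v, hv0, hvd, hv⟩ := path_of_pos' A hA d i j hpos
    have hninj : ¬ Function.Injective (fun t : Fin (d+1) => v t) := by
      intro hinj
      have hcard := Fintype.card_le_of_injective _ hinj
      simp at hcard
    obtain ⟨a, b, hab, hne⟩ := Function.not_injective_iff.mp hninj
    rcases hne.lt_or_gt with h | h
    · exact hnc (cycle_of_repeat' A v d hv a b (Fin.lt_iff_val_lt_val.mp h)
        (Nat.lt_succ_iff.mp b.isLt) hab)
    · exact hnc (cycle_of_repeat' A v d hv b a (Fin.lt_iff_val_lt_val.mp h)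
        (Nat.lt_succ_iff.mp a.isLt) hab.symm)
  refine ⟨⟨?_, fun h => ⟨d, hacyc h⟩⟩, hacyc⟩
  rintro ⟨N, hN⟩ ⟨k, v, hk, hvk, hpos⟩
  have hk0 : 0 < k := hk
  set w : ℕ → Fin d := fun i => v (i % k) with hw
  have hwstep : ∀ i, 0 < A (w i) (w (i + 1)) := by
    intro i
    have hr : i % k < k := Nat.mod_lt _ hk0
    have heq : (i + 1) % k = (i % k + 1) % k := (Nat.mod_add_mod i k 1).symm
    show 0 < A (v (i % k)) (v ((i + 1) % k))
    rcases Nat.lt_or_ge (i % k + 1) k with h | h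
    · rw [heq, Nat.mod_eq_of_lt h]
      exact hpos _ hr
    · have hk1 : i % k + 1 = k := by omega
      rw [heq, hk1, Nat.mod_self, ← hvk]
      have h' := hpos (i % k) hr
      rwa [hk1] at h'
  have hlt : 0 < (A ^ (k * (N + 1))) (w 0) (w (k * (N + 1))) :=
    pos_of_path' A hA _ w fun t _ => hwstep t
  have hNle : N ≤ k * (N + 1) := by
    calc N ≤ N + 1 := Nat.le_succ N
    _ ≤ k * (N + 1) := Nat.le_mul_of_pos_left _ hk0
  have hzero : A ^ (k * (N + 1)) = 0 := by
    rw [show k * (N + 1) = N + (k * (N + 1) - N) from (Nat.add_sub_cancel' hNle).symm,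
      pow_add, hN, zero_mul]
  rw [hzero] at hlt
  simp at hlt
end
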